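/- arXiv:1006.4541 — 4 statements merged into one kernel-verified Lean document; each statement's English description precedes it below -/
import Mathlib

section
/- Let D be a *-subalgebra of B(H) for a complex Hilbert space H, let δ be a symmetric derivation with domain D, and let Ω ∈ H be a unit vector that is cyclic for D (i.e. {AΩ : A ∈ D} is dense in H). Denote ω(x) = ⟨Ω, xΩ⟩. Suppose there is a constant L ≥ 0 such that |ω(δ(A))| ≤ L·(ω(A*A) + ω(AA*))^{1/2} for all A ∈ D. Then there exists a symmetric linear operator T on H with domain Dom(T) = {BΩ : B ∈ D} such that δ(A)(BΩ) = i·(T(ABΩ) − A·T(BΩ)) for all A, B ∈ D, i.e. δ(A)ψ = i[T, A]ψ for all ψ ∈ Dom(T). -/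
/-!
The functional `C ↦ ω(δ C)` is bounded by `L ‖(CΩ, C*Ω)‖`, so Hahn–Banach and Riesz in the real
Hilbert space `H ⊕ H` write its real part as `Re (⟨v, CΩ⟩ + ⟨w, C*Ω⟩)`. Complex linearity and
`ω(δ C*) = conj ω(δ C)` upgrade this to `ω(δ C) = ⟨u, CΩ⟩ + ⟨Ω, C u⟩` for a single vector `u`.
Then `S B = -i δ(B)Ω + i B u` satisfies `⟨S A, BΩ⟩ = ⟨AΩ, S B⟩` by the Leibniz rule, so by
cyclicity `S B` depends only on `BΩ`, and `T (BΩ) := S B` is the required operator.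
-/

open ComplexConjugate

theorem LinearMap.exists_linearPMap_of_ker_le {R M E F : Type*} [Ring R]
    [AddCommGroup M] [Module R M] [AddCommGroup E] [Module R E] [AddCommGroup F] [Module R F]
    (e : M →ₗ[R] E) (s : M →ₗ[R] F) (h : LinearMap.ker e ≤ LinearMap.ker s) :
    ∃ T : E →ₗ.[R] F, T.domain = LinearMap.range e ∧
      ∀ x (hx : e x ∈ T.domain), T ⟨e x, hx⟩ = s x := by
  refine ⟨⟨LinearMap.range e, (Submodule.liftQ _ s h).comp e.quotKerEquivRange.symm.toLinearMap⟩,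
    rfl, fun x hx => ?_⟩
  change Submodule.liftQ _ s h (e.quotKerEquivRange.symm ⟨e x, hx⟩) = s x
  rw [LinearMap.quotKerEquivRange_symm_apply_image]
  rfl

theorem exists_inner_eq_of_abs_le {V E : Type*} [AddCommGroup V] [Module ℝ V]
    [NormedAddCommGroup E] [InnerProductSpace ℝ E] [CompleteSpace E]
    (j : V →ₗ[ℝ] E) (f : V →ₗ[ℝ] ℝ) (L : ℝ) (hf : ∀ x, |f x| ≤ L * ‖j x‖) :
    ∃ v : E, ∀ x, f x = inner ℝ v (j x) := by
  have hker : LinearMap.ker j ≤ LinearMap.ker f := fun x hx => by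
    have := hf x
    rw [LinearMap.mem_ker.mp hx, norm_zero, mul_zero, abs_nonpos_iff] at this
    exact this
  obtain ⟨T, hdom, hT⟩ := j.exists_linearPMap_of_ker_le f hker
  have hTbound : ∀ y : T.domain, ‖T y‖ ≤ L * ‖y‖ := by
    rintro ⟨y, hy⟩
    obtain ⟨x, rfl⟩ := hdom ▸ hy
    rw [hT x hy]
    exact hf x
  obtain ⟨g, hg, -⟩ := exists_extension_norm_eq T.domain (T.toFun.mkContinuous L hTbound)
  refine ⟨(InnerProductSpace.toDual ℝ E).symm g, fun x => ?_⟩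
  have hx : j x ∈ T.domain := hdom ▸ LinearMap.mem_range_self j x
  rw [InnerProductSpace.toDual_symm_apply, ← hT x hx]
  exact (hg ⟨j x, hx⟩).symm

theorem Complex.linearMap_ext_of_re {V : Type*} [AddCommGroup V] [Module ℂ V]
    {f g : V →ₗ[ℂ] ℂ} (h : ∀ x, (f x).re = (g x).re) : f = g := by
  ext x
  have hIm : ∀ φ : V →ₗ[ℂ] ℂ, (φ x).im = -(φ (Complex.I • x)).re := fun φ => by
    simp [map_smul]
  exact Complex.ext (h x) (by rw [hIm, hIm, h])

namespace NonUnitalStarSubalgebra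

variable {H : Type*} [NormedAddCommGroup H] [InnerProductSpace ℂ H] [CompleteSpace H]
  (D : NonUnitalStarSubalgebra ℂ (H →L[ℂ] H))

noncomputable def applyₗ (x : H) : D →ₗ[ℂ] H where
  toFun B := (B : H →L[ℂ] H) x
  map_add' _ _ := rfl
  map_smul' _ _ := rfl

variable {D}

theorem inner_star_apply (A : D) (x y : H) :
    inner ℂ x (((star A : D) : H →L[ℂ] H) y) = inner ℂ ((A : H →L[ℂ] H) x) y := by
  rw [StarMemClass.coe_star, ContinuousLinearMap.star_eq_adjoint,
    ContinuousLinearMap.adjoint_inner_right]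

theorem inner_star_mul_apply (A B : D) (x y : H) :
    inner ℂ x (((star A * B : D) : H →L[ℂ] H) y) =
      inner ℂ ((A : H →L[ℂ] H) x) ((B : H →L[ℂ] H) y) :=
  inner_star_apply A x _

theorem re_inner_star_mul_self_apply (A : D) (x : H) :
    (inner ℂ x (((star A * A : D) : H →L[ℂ] H) x)).re = ‖(A : H →L[ℂ] H) x‖ ^ 2 := by
  rw [inner_star_mul_apply, ← RCLike.re_to_complex, inner_self_eq_norm_sq]

section RealPair

attribute [local instance] InnerProductSpace.complexToReal

variable (D) in
/-- Only `ℝ`-linear, since `C ↦ C*` is conjugate-linear; this is why a real Hilbert space enters. -/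
noncomputable def applyPairₗ (x : H) : D →ₗ[ℝ] WithLp 2 (H × H) where
  toFun C := WithLp.toLp 2 ((C : H →L[ℂ] H) x, ((star C : D) : H →L[ℂ] H) x)
  map_add' A B := by rw [star_add]; rfl
  map_smul' r C := by rw [star_smul, star_trivial]; rfl

theorem exists_eq_inner_add_inner_of_norm_le (Ω : H) (F : D →ₗ[ℂ] ℂ) (L : ℝ)
    (hF : ∀ C : D, ‖F C‖ ≤
      L * √(‖(C : H →L[ℂ] H) Ω‖ ^ 2 + ‖((star C : D) : H →L[ℂ] H) Ω‖ ^ 2)) :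
    ∃ v w : H, ∀ C : D,
      F C = inner ℂ v ((C : H →L[ℂ] H) Ω) + inner ℂ Ω ((C : H →L[ℂ] H) w) := by
  obtain ⟨p, hp⟩ := exists_inner_eq_of_abs_le (D.applyPairₗ Ω)
    (Complex.reLm.comp (F.restrictScalars ℝ)) L fun C => by
      rw [WithLp.prod_norm_eq_of_L2]
      exact (Complex.abs_re_le_norm _).trans (hF C)
  let G : D →ₗ[ℂ] ℂ := innerₛₗ ℂ p.fst ∘ₗ D.applyₗ Ω + innerₛₗ ℂ Ω ∘ₗ D.applyₗ p.snd
  suffices hFG : F = G from ⟨p.fst, p.snd, LinearMap.congr_fun hFG⟩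
  refine Complex.linearMap_ext_of_re fun C => ?_
  have hre : (F C).re = (inner ℂ p.fst ((C : H →L[ℂ] H) Ω)).re +
      (inner ℂ p.snd (((star C : D) : H →L[ℂ] H) Ω)).re := hp C
  rw [hre, inner_star_apply, ← inner_conj_symm _ Ω, Complex.conj_re]
  rfl

end RealPair

theorem exists_eq_inner_add_inner_of_norm_le_of_map_star (Ω : H) (F : D →ₗ[ℂ] ℂ) (L : ℝ)
    (hF : ∀ C : D, ‖F C‖ ≤
      L * √(‖(C : H →L[ℂ] H) Ω‖ ^ 2 + ‖((star C : D) : H →L[ℂ] H) Ω‖ ^ 2))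
    (hF_star : ∀ C : D, F (star C) = conj (F C)) :
    ∃ u : H, ∀ C : D,
      F C = inner ℂ u ((C : H →L[ℂ] H) Ω) + inner ℂ Ω ((C : H →L[ℂ] H) u) := by
  obtain ⟨v, w, hvw⟩ := exists_eq_inner_add_inner_of_norm_le Ω F L hF
  have hwv : ∀ C : D,
      F C = inner ℂ w ((C : H →L[ℂ] H) Ω) + inner ℂ Ω ((C : H →L[ℂ] H) v) := fun C => by
    rw [← Complex.conj_conj (F C), ← hF_star, hvw, inner_star_apply, inner_star_apply, map_add,
      inner_conj_symm, inner_conj_symm, add_comm]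
  refine ⟨(2⁻¹ : ℂ) • (v + w), fun C => ?_⟩
  rw [map_smul, inner_smul_left, inner_smul_right, map_add, inner_add_left, inner_add_right,
    map_inv₀, map_ofNat]
  linear_combination (2⁻¹ : ℂ) * (hvw C + hwv C)

end NonUnitalStarSubalgebra

namespace DerivationImplementation

open NonUnitalStarSubalgebra

variable {H : Type*} [NormedAddCommGroup H] [InnerProductSpace ℂ H] [CompleteSpace H]
  {D : NonUnitalStarSubalgebra ℂ (H →L[ℂ] H)} (δ : D →ₗ[ℂ] (H →L[ℂ] H)) (Ω u : H)

noncomputable def implementer : D →ₗ[ℂ] H :=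
  (-Complex.I) • ((ContinuousLinearMap.apply ℂ H Ω).toLinearMap ∘ₗ δ) + Complex.I • D.applyₗ u

theorem implementer_apply (B : D) :
    implementer δ Ω u B = (-Complex.I) • δ B Ω + Complex.I • (B : H →L[ℂ] H) u := rfl

variable {δ}

theorem derivation_apply_eq_commutator
    (hLeib : ∀ A B : D, δ (A * B) = δ A * (B : H →L[ℂ] H) + (A : H →L[ℂ] H) * δ B) (A B : D) :
    δ A ((B : H →L[ℂ] H) Ω) = Complex.I • (implementer δ Ω u (A * B) -
      (A : H →L[ℂ] H) (implementer δ Ω u B)) := by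
  simp only [implementer_apply, hLeib, add_apply,
    mul_apply_eq_comp, map_add, map_smul, NonUnitalStarSubalgebra.coe_mul]
  rw [smul_add, add_sub_add_right_eq_sub, add_sub_cancel_right, smul_smul]
  simp

theorem inner_derivation_add_inner_derivation
    (hLeib : ∀ A B : D, δ (A * B) = δ A * (B : H →L[ℂ] H) + (A : H →L[ℂ] H) * δ B)
    (hSym : ∀ A : D, δ (star A) = star (δ A)) (A B : D) :
    inner ℂ (δ A Ω) ((B : H →L[ℂ] H) Ω) + inner ℂ ((A : H →L[ℂ] H) Ω) (δ B Ω) =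
      inner ℂ Ω (δ (star A * B) Ω) := by
  rw [hLeib, add_apply, inner_add_right, mul_apply_eq_comp,
    mul_apply_eq_comp, hSym, ContinuousLinearMap.star_eq_adjoint,
    ContinuousLinearMap.adjoint_inner_right, inner_star_apply]

theorem inner_derivation_star_apply (hSym : ∀ A : D, δ (star A) = star (δ A)) (A : D) :
    inner ℂ Ω (δ (star A) Ω) = conj (inner ℂ Ω (δ A Ω)) := by
  rw [hSym, ContinuousLinearMap.star_eq_adjoint, ContinuousLinearMap.adjoint_inner_right,
    inner_conj_symm]

theorem inner_implementer_symm
    (hLeib : ∀ A B : D, δ (A * B) = δ A * (B : H →L[ℂ] H) + (A : H →L[ℂ] H) * δ B)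
    (hSym : ∀ A : D, δ (star A) = star (δ A))
    (hu : ∀ C : D, inner ℂ Ω (δ C Ω) =
      inner ℂ u ((C : H →L[ℂ] H) Ω) + inner ℂ Ω ((C : H →L[ℂ] H) u)) (A B : D) :
    inner ℂ (implementer δ Ω u A) ((B : H →L[ℂ] H) Ω) =
      inner ℂ ((A : H →L[ℂ] H) Ω) (implementer δ Ω u B) := by
  have hδ := inner_derivation_add_inner_derivation Ω hLeib hSym A B
  rw [hu, inner_star_mul_apply, inner_star_mul_apply] at hδ
  simp only [implementer_apply, inner_add_left, inner_add_right, inner_smul_left,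
    inner_smul_right, map_neg, Complex.conj_I]
  linear_combination Complex.I * hδ

theorem implementer_eq_zero_of_apply_eq_zero
    (hLeib : ∀ A B : D, δ (A * B) = δ A * (B : H →L[ℂ] H) + (A : H →L[ℂ] H) * δ B)
    (hSym : ∀ A : D, δ (star A) = star (δ A))
    (hcyclic : Dense {x : H | ∃ B : D, (B : H →L[ℂ] H) Ω = x})
    (hu : ∀ C : D, inner ℂ Ω (δ C Ω) =
      inner ℂ u ((C : H →L[ℂ] H) Ω) + inner ℂ Ω ((C : H →L[ℂ] H) u))
    {B : D} (hB : (B : H →L[ℂ] H) Ω = 0) : implementer δ Ω u B = 0 := by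
  refine hcyclic.eq_zero_of_inner_right ℂ fun _ ⟨A, hA⟩ => ?_
  rw [← hA, ← inner_implementer_symm Ω u hLeib hSym hu, hB, inner_zero_right]

end DerivationImplementation

open NonUnitalStarSubalgebra DerivationImplementation in
theorem derivation_implemented_of_state_bound_general
    {H : Type*} [NormedAddCommGroup H] [InnerProductSpace ℂ H] [CompleteSpace H]
    (D : NonUnitalStarSubalgebra ℂ (H →L[ℂ] H)) (δ : D →ₗ[ℂ] (H →L[ℂ] H))
    (hLeib : ∀ A B : D, δ (A * B) = δ A * (B : H →L[ℂ] H) + (A : H →L[ℂ] H) * δ B)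
    (hSym : ∀ A : D, δ (star A) = star (δ A))
    (Ω : H)
    -- `Ω` is cyclic for `D`
    (hcyclic : Dense {x : H | ∃ B : D, (B : H →L[ℂ] H) Ω = x})
    -- the state bound `|ω(δ(A))| ≤ L (ω(A*A) + ω(AA*))^{1/2}`
    (L : ℝ)
    (hbound : ∀ A : D, ‖(inner ℂ Ω (δ A Ω) : ℂ)‖ ≤
      L * Real.sqrt ((inner ℂ Ω (((star A * A : D) : H →L[ℂ] H) Ω) : ℂ).re +
        (inner ℂ Ω (((A * star A : D) : H →L[ℂ] H) Ω) : ℂ).re)) :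
    ∃ T : H →ₗ.[ℂ] H,
      -- the domain of `T` is `{BΩ : B ∈ D}`
      (T.domain : Set H) = {x : H | ∃ B : D, (B : H →L[ℂ] H) Ω = x} ∧
      -- `T` is symmetric
      (∀ x y : T.domain, (inner ℂ (T x) (y : H) : ℂ) = inner ℂ (x : H) (T y)) ∧
      -- `δ(A)ψ = i (T(Aψ) − A(Tψ))` for `ψ = BΩ` in the domain of `T`
      (∀ (A B : D) (hB : (B : H →L[ℂ] H) Ω ∈ T.domain)
        (hAB : ((A : H →L[ℂ] H) * B) Ω ∈ T.domain),
        δ A ((B : H →L[ℂ] H) Ω) =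
          Complex.I • (T ⟨((A : H →L[ℂ] H) * B) Ω, hAB⟩ -
            (A : H →L[ℂ] H) (T ⟨(B : H →L[ℂ] H) Ω, hB⟩))) := by
  let F : D →ₗ[ℂ] ℂ := innerₛₗ ℂ Ω ∘ₗ (ContinuousLinearMap.apply ℂ H Ω).toLinearMap ∘ₗ δ
  have hF : ∀ C : D, ‖F C‖ ≤
      L * √(‖(C : H →L[ℂ] H) Ω‖ ^ 2 + ‖((star C : D) : H →L[ℂ] H) Ω‖ ^ 2) := fun C => by
    have h := re_inner_star_mul_self_apply (star C) Ω
    rw [star_star] at h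
    rw [← re_inner_star_mul_self_apply, ← h]
    exact hbound C
  obtain ⟨u, hu⟩ := exists_eq_inner_add_inner_of_norm_le_of_map_star Ω F L hF
    (inner_derivation_star_apply Ω hSym)
  obtain ⟨T, hdom, hT⟩ := (D.applyₗ Ω).exists_linearPMap_of_ker_le (implementer δ Ω u)
    fun B hB => implementer_eq_zero_of_apply_eq_zero Ω u hLeib hSym hcyclic hu hB
  refine ⟨T, by rw [hdom, LinearMap.coe_range]; rfl, ?_, fun A B hB hAB => ?_⟩
  · rintro ⟨x, hx⟩ ⟨y, hy⟩
    obtain ⟨A, rfl⟩ := hdom ▸ hx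
    obtain ⟨B, rfl⟩ := hdom ▸ hy
    rw [hT A hx, hT B hy]
    exact inner_implementer_symm Ω u hLeib hSym hu A B
  · rw [derivation_apply_eq_commutator Ω u hLeib, ← hT (A * B) hAB, ← hT B hB]
    rfl

/-- Proposition 3.1 (Bratteli–Robinson): Let `δ` be a symmetric derivation on a
`*`-subalgebra `D` of `B(H)`, let `Ω` be a unit cyclic vector for `D` and set
`ω(x) = ⟨Ω, xΩ⟩`.  If `|ω(δ(A))| ≤ L (ω(A*A) + ω(AA*))^{1/2}` for all `A ∈ D`, then
there is a symmetric operator `T` with domain `{BΩ : B ∈ D}` such that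
`δ(A)ψ = i[T, A]ψ` for `ψ` in the domain of `T`. -/
theorem derivation_implemented_of_state_bound
    {H : Type*} [NormedAddCommGroup H] [InnerProductSpace ℂ H] [CompleteSpace H]
    (D : NonUnitalStarSubalgebra ℂ (H →L[ℂ] H)) (δ : D →ₗ[ℂ] (H →L[ℂ] H))
    (hLeib : ∀ A B : D, δ (A * B) = δ A * (B : H →L[ℂ] H) + (A : H →L[ℂ] H) * δ B)
    (hSym : ∀ A : D, δ (star A) = star (δ A))
    (Ω : H) (hΩ : ‖Ω‖ = 1)
    -- `Ω` is cyclic for `D`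
    (hcyclic : Dense {x : H | ∃ B : D, (B : H →L[ℂ] H) Ω = x})
    -- the state bound `|ω(δ(A))| ≤ L (ω(A*A) + ω(AA*))^{1/2}`
    (L : ℝ) (hL : 0 ≤ L)
    (hbound : ∀ A : D, ‖(inner ℂ Ω (δ A Ω) : ℂ)‖ ≤
      L * Real.sqrt ((inner ℂ Ω (((star A * A : D) : H →L[ℂ] H) Ω) : ℂ).re +
        (inner ℂ Ω (((A * star A : D) : H →L[ℂ] H) Ω) : ℂ).re)) :
    ∃ T : H →ₗ.[ℂ] H,
      -- the domain of `T` is `{BΩ : B ∈ D}`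
      (T.domain : Set H) = {x : H | ∃ B : D, (B : H →L[ℂ] H) Ω = x} ∧
      -- `T` is symmetric
      (∀ x y : T.domain, (inner ℂ (T x) (y : H) : ℂ) = inner ℂ (x : H) (T y)) ∧
      -- `δ(A)ψ = i (T(Aψ) − A(Tψ))` for `ψ = BΩ` in the domain of `T`
      (∀ (A B : D) (hB : (B : H →L[ℂ] H) Ω ∈ T.domain)
        (hAB : ((A : H →L[ℂ] H) * B) Ω ∈ T.domain),
        δ A ((B : H →L[ℂ] H) Ω) =
          Complex.I • (T ⟨((A : H →L[ℂ] H) * B) Ω, hAB⟩ -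
            (A : H →L[ℂ] H) (T ⟨(B : H →L[ℂ] H) Ω, hB⟩))) :=
  derivation_implemented_of_state_bound_general D δ hLeib hSym Ω hcyclic L hbound
end

section
/- Let T be a densely defined symmetric linear operator on a separable complex Hilbert space H whose deficiency indices are unequal, i.e. dim(Ran(T − i·I))^⊥ ≠ dim(Ran(T + i·I))^⊥. Then there exist a complex Hilbert space Ĥ, an isometric linear embedding ι : H → Ĥ, and a self-adjoint (possibly unbounded) operator K on Ĥ extending T, i.e. ι(Dom(T)) ⊆ Dom(K) and K(ι(u)) = ι(T u) for all u ∈ Dom(T). -/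
/-!
On `H ⊕ H` let `K (x, y) = (T† x, -T† y)` on the pairs `x, y ∈ Dom T†` with `x + y ∈ Dom T††`.
Since `T ≤ T†` and taking adjoints reverses `≤`, we have `T†† ≤ T†`, so the boundary form
`⟪T† a, b⟫ - ⟪a, T† b⟫` vanishes as soon as `a` or `b` lies in `Dom T††`. Writing
`x = (x + y) - y` then shows that the boundary forms of the two components cancel, so `K` is
symmetric. Testing `K†` against `(u, 0)` and `(0, u)` for `u ∈ Dom T` and against `(w, -w)` for
`w ∈ Dom T†` puts both components of a vector of `Dom K†` in `Dom T†` and their sum in `Dom T††`,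
so `K† ≤ K`. The embedding `x ↦ (x, 0)` carries `T` into `K`.
-/

open LinearPMap
open scoped InnerProductSpace

noncomputable section

namespace WithLp

variable (p : ENNReal) [Fact (1 ≤ p)] (𝕜 E F : Type*) [NormedField 𝕜]
  [SeminormedAddCommGroup E] [NormedSpace 𝕜 E] [SeminormedAddCommGroup F] [NormedSpace 𝕜 F]

def inlₗᵢ : E →ₗᵢ[𝕜] WithLp p (E × F) where
  toFun x := toLp p (x, 0)
  map_add' x y := by simp [← toLp_add]
  map_smul' c x := by simp [← toLp_smul]
  norm_map' := norm_toLp_fst p E F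

variable {p 𝕜 E F} in
@[simp]
lemma inlₗᵢ_apply (x : E) : inlₗᵢ p 𝕜 E F x = toLp p (x, 0) := rfl

end WithLp

namespace LinearPMap

variable {𝕜 E : Type*} [RCLike 𝕜] [NormedAddCommGroup E] [InnerProductSpace 𝕜 E]
  [CompleteSpace E]

section Adjoint

variable {S T : E →ₗ.[𝕜] E}

theorem adjoint_le_adjoint (hS : Dense (S.domain : Set E)) (h : S ≤ T) : T† ≤ S† :=
  IsFormalAdjoint.le_adjoint hS fun x y => by
    rw [h.2 (x := x) (y := ⟨x, h.1 x.2⟩) rfl, ← inner_conj_symm,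
      ← adjoint_isFormalAdjoint (hS.mono h.1) y, inner_conj_symm]

theorem le_adjoint_adjoint (hT : Dense (T.domain : Set E)) (hT' : Dense (T†.domain : Set E)) :
    T ≤ T†† :=
  IsFormalAdjoint.le_adjoint hT' (adjoint_isFormalAdjoint hT)

theorem inner_apply_eq_of_adjoint_le (hS : Dense (S.domain : Set E)) (h : S† ≤ S)
    (z w : S.domain) (hz : (z : E) ∈ S†.domain) : ⟪S z, w⟫_𝕜 = ⟪(z : E), S w⟫_𝕜 := by
  rw [← h.2 (x := ⟨z, hz⟩) rfl]
  exact adjoint_isFormalAdjoint hS _ w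

end Adjoint

section Naimark

variable (S : E →ₗ.[𝕜] E)

def naimarkDomain : Submodule 𝕜 (WithLp 2 (E × E)) :=
  S.domain.comap (WithLp.fstₗ 2 𝕜 E E) ⊓ S.domain.comap (WithLp.sndₗ 2 𝕜 E E) ⊓
    S†.domain.comap (WithLp.fstₗ 2 𝕜 E E + WithLp.sndₗ 2 𝕜 E E)

variable {S} in
theorem mem_naimarkDomain {p : WithLp 2 (E × E)} :
    p ∈ naimarkDomain S ↔ p.fst ∈ S.domain ∧ p.snd ∈ S.domain ∧ p.fst + p.snd ∈ S†.domain :=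
  and_assoc

variable {S} in
theorem toLp_neg_mem_naimarkDomain (w : S.domain) :
    WithLp.toLp 2 ((w : E), -(w : E)) ∈ naimarkDomain S :=
  mem_naimarkDomain.2 ⟨w.2, neg_mem w.2, by simp [zero_mem]⟩

def naimarkOp : WithLp 2 (E × E) →ₗ.[𝕜] WithLp 2 (E × E) where
  domain := naimarkDomain S
  toFun := (WithLp.linearEquiv 2 𝕜 (E × E)).symm.toLinearMap ∘ₗ LinearMap.prod
    (S.toFun ∘ₗ ((WithLp.fstₗ 2 𝕜 E E) ∘ₗ (naimarkDomain S).subtype).codRestrict S.domain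
      fun p => (mem_naimarkDomain.1 p.2).1)
    (-S.toFun ∘ₗ ((WithLp.sndₗ 2 𝕜 E E) ∘ₗ (naimarkDomain S).subtype).codRestrict S.domain
      fun p => (mem_naimarkDomain.1 p.2).2.1)

variable {S}

theorem naimarkOp_fst (p : (naimarkOp S).domain) (x : S.domain)
    (hx : (x : E) = (p : WithLp 2 (E × E)).fst) : (naimarkOp S p).fst = S x :=
  congrArg S (Subtype.ext hx.symm)

theorem naimarkOp_snd (p : (naimarkOp S).domain) (y : S.domain)
    (hy : (y : E) = (p : WithLp 2 (E × E)).snd) : (naimarkOp S p).snd = -S y :=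
  congrArg (-S ·) (Subtype.ext hy.symm)

theorem naimarkOp_isFormalAdjoint (hS : Dense (S.domain : Set E)) (h : S† ≤ S) :
    (naimarkOp S).IsFormalAdjoint (naimarkOp S) := by
  intro p q
  obtain ⟨ha, hb, hab⟩ := mem_naimarkDomain.1 p.2
  obtain ⟨ha', hb', hab'⟩ := mem_naimarkDomain.1 q.2
  have h₁ := congrArg (starRingEnd 𝕜)
    (inner_apply_eq_of_adjoint_le hS h (⟨_, ha'⟩ + ⟨_, hb'⟩) ⟨_, ha⟩ hab')
  have h₂ := inner_apply_eq_of_adjoint_le hS h (⟨_, ha⟩ + ⟨_, hb⟩) ⟨_, hb'⟩ hab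
  rw [S.map_add, inner_conj_symm, inner_conj_symm] at h₁
  rw [S.map_add] at h₂
  simp only [WithLp.prod_inner_apply, WithLp.ofLp_fst, WithLp.ofLp_snd]
  rw [naimarkOp_fst p ⟨_, ha⟩ rfl, naimarkOp_snd p ⟨_, hb⟩ rfl,
    naimarkOp_fst q ⟨_, ha'⟩ rfl, naimarkOp_snd q ⟨_, hb'⟩ rfl]
  simp only [Submodule.coe_add, inner_add_left, inner_add_right, inner_neg_left,
    inner_neg_right] at h₁ h₂ ⊢
  linear_combination -h₁ - h₂

section Symmetric

variable {T : E →ₗ.[𝕜] E} (hT : Dense (T.domain : Set E)) (hTT : T ≤ T†)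
include hT hTT

theorem toLp_mem_naimarkDomain_adjoint (x y : T.domain) :
    WithLp.toLp 2 ((x : E), (y : E)) ∈ naimarkDomain T† := by
  have hT'' := le_adjoint_adjoint hT (hT.mono hTT.1)
  exact mem_naimarkDomain.2 ⟨hTT.1 x.2, hTT.1 y.2, hT''.1 (add_mem x.2 y.2)⟩

theorem naimarkOp_adjoint_apply_toLp (x y : T.domain) :
    naimarkOp T† ⟨_, toLp_mem_naimarkDomain_adjoint hT hTT x y⟩ =
      WithLp.toLp 2 (T x, -T y) := by
  refine WithLp.ofLp_injective 2 (Prod.ext ?_ ?_)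
  · exact (naimarkOp_fst _ ⟨(x : E), hTT.1 x.2⟩ rfl).trans (hTT.2 rfl).symm
  · exact (naimarkOp_snd _ ⟨(y : E), hTT.1 y.2⟩ rfl).trans (congrArg Neg.neg (hTT.2 rfl).symm)

theorem dense_naimarkOp_adjoint_domain :
    Dense ((naimarkOp T†).domain : Set (WithLp 2 (E × E))) := by
  have h : Dense (WithLp.ofLp ⁻¹' ((T.domain : Set E) ×ˢ (T.domain : Set E))) :=
    (hT.prod hT).preimage (WithLp.homeomorphProd 2 E E).isOpenMap
  refine h.mono ?_
  rintro p ⟨hx, hy⟩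
  exact toLp_mem_naimarkDomain_adjoint hT hTT ⟨_, hx⟩ ⟨_, hy⟩

theorem inner_adjoint_naimarkOp_adjoint_apply (p : (naimarkOp T†)†.domain) (x y : T.domain) :
    ⟪((naimarkOp T†)† p).fst, (x : E)⟫_𝕜 + ⟪((naimarkOp T†)† p).snd, (y : E)⟫_𝕜 =
      ⟪(p : WithLp 2 (E × E)).fst, T x⟫_𝕜 - ⟪(p : WithLp 2 (E × E)).snd, T y⟫_𝕜 := by
  have h := adjoint_isFormalAdjoint (dense_naimarkOp_adjoint_domain hT hTT) p
    ⟨_, toLp_mem_naimarkDomain_adjoint hT hTT x y⟩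
  rw [naimarkOp_adjoint_apply_toLp hT hTT] at h
  simpa [sub_eq_add_neg] using h

theorem mem_adjoint_naimarkOp_fst (p : (naimarkOp T†)†.domain) :
    ∃ h : (p : WithLp 2 (E × E)).fst ∈ T†.domain, T† ⟨_, h⟩ = ((naimarkOp T†)† p).fst := by
  have hx (x : T.domain) :
      ⟪((naimarkOp T†)† p).fst, (x : E)⟫_𝕜 = ⟪(p : WithLp 2 (E × E)).fst, T x⟫_𝕜 := by
    simpa using inner_adjoint_naimarkOp_adjoint_apply hT hTT p x 0
  exact ⟨mem_adjoint_domain_of_exists _ ⟨_, hx⟩, adjoint_apply_eq hT _ hx⟩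

theorem mem_adjoint_naimarkOp_snd (p : (naimarkOp T†)†.domain) :
    ∃ h : (p : WithLp 2 (E × E)).snd ∈ T†.domain, T† ⟨_, h⟩ = -((naimarkOp T†)† p).snd := by
  have hy (y : T.domain) :
      ⟪-((naimarkOp T†)† p).snd, (y : E)⟫_𝕜 = ⟪(p : WithLp 2 (E × E)).snd, T y⟫_𝕜 := by
    simpa [inner_neg_left, neg_eq_iff_eq_neg] using
      inner_adjoint_naimarkOp_adjoint_apply hT hTT p 0 y
  exact ⟨mem_adjoint_domain_of_exists _ ⟨_, hy⟩, adjoint_apply_eq hT _ hy⟩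

theorem mem_adjoint_naimarkOp_fst_add_snd (p : (naimarkOp T†)†.domain) :
    (p : WithLp 2 (E × E)).fst + (p : WithLp 2 (E × E)).snd ∈ T††.domain := by
  refine mem_adjoint_domain_of_exists _
    ⟨((naimarkOp T†)† p).fst - ((naimarkOp T†)† p).snd, fun w => ?_⟩
  have h := adjoint_isFormalAdjoint (dense_naimarkOp_adjoint_domain hT hTT) p
    ⟨_, toLp_neg_mem_naimarkDomain w⟩
  simp only [WithLp.prod_inner_apply, WithLp.ofLp_fst, WithLp.ofLp_snd] at h
  rw [naimarkOp_fst _ w rfl, naimarkOp_snd _ (-w) rfl, map_neg] at h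
  simp only [neg_neg, inner_neg_right, inner_sub_left, inner_add_left] at h ⊢
  linear_combination h

theorem adjoint_naimarkOp_adjoint_le : (naimarkOp T†)† ≤ naimarkOp T† := by
  refine le_of_eqLocus_ge fun p hp => ?_
  obtain ⟨ha, hfst⟩ := mem_adjoint_naimarkOp_fst hT hTT ⟨p, hp⟩
  obtain ⟨hb, hsnd⟩ := mem_adjoint_naimarkOp_snd hT hTT ⟨p, hp⟩
  have hab := mem_adjoint_naimarkOp_fst_add_snd hT hTT ⟨p, hp⟩
  have hK : p ∈ (naimarkOp T†).domain := mem_naimarkDomain.2 ⟨ha, hb, hab⟩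
  refine ⟨hp, hK, WithLp.ofLp_injective 2 (Prod.ext ?_ ?_)⟩
  · exact hfst.symm.trans (naimarkOp_fst ⟨p, hK⟩ ⟨_, ha⟩ rfl).symm
  · rw [WithLp.ofLp_snd, WithLp.ofLp_snd, naimarkOp_snd ⟨p, hK⟩ ⟨_, hb⟩ rfl, hsnd, neg_neg]

theorem isSelfAdjoint_naimarkOp_adjoint : IsSelfAdjoint (naimarkOp T†) := by
  have hK := dense_naimarkOp_adjoint_domain hT hTT
  have hT' : Dense (T†.domain : Set E) := hT.mono hTT.1
  exact le_antisymm (adjoint_naimarkOp_adjoint_le hT hTT)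
    ((naimarkOp_isFormalAdjoint hT' (adjoint_le_adjoint hT hTT)).le_adjoint hK)

end Symmetric

end Naimark

end LinearPMap

theorem naimark_selfadjoint_extension_general
    {H : Type u} [NormedAddCommGroup H] [InnerProductSpace ℂ H] [CompleteSpace H]
    (T : H →ₗ.[ℂ] H) (hdense : Dense (T.domain : Set H))
    (hsymm : ∀ x y : T.domain, (inner ℂ (T x) (y : H) : ℂ) = inner ℂ (x : H) (T y)) :
    ∃ (H' : Type u) (_ : NormedAddCommGroup H') (_ : InnerProductSpace ℂ H')
      (_ : CompleteSpace H') (ι : H →ₗᵢ[ℂ] H') (K : H' →ₗ.[ℂ] H'),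
      IsSelfAdjoint K ∧
      (∀ u : T.domain, ι (u : H) ∈ K.domain) ∧
      (∀ (u : T.domain) (hu : ι (u : H) ∈ K.domain), K ⟨ι (u : H), hu⟩ = ι (T u)) := by
  have hTT : T ≤ T† := IsFormalAdjoint.le_adjoint hdense hsymm
  refine ⟨WithLp 2 (H × H), inferInstance, inferInstance, inferInstance, WithLp.inlₗᵢ 2 ℂ H H,
    naimarkOp T†, isSelfAdjoint_naimarkOp_adjoint hdense hTT,
    fun u => toLp_mem_naimarkDomain_adjoint hdense hTT u 0, fun u _ => ?_⟩
  simpa using naimarkOp_adjoint_apply_toLp hdense hTT u 0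

/-- Naimark's theorem (Proposition 3.4): a densely defined symmetric operator `T` on a
separable complex Hilbert space whose deficiency indices are unequal admits a
self-adjoint extension `K` on a larger Hilbert space `Ĥ ⊇ H`. -/
theorem naimark_selfadjoint_extension
    {H : Type u} [NormedAddCommGroup H] [InnerProductSpace ℂ H] [CompleteSpace H]
    [TopologicalSpace.SeparableSpace H]
    (T : H →ₗ.[ℂ] H) (hdense : Dense (T.domain : Set H))
    (hsymm : ∀ x y : T.domain, (inner ℂ (T x) (y : H) : ℂ) = inner ℂ (x : H) (T y))
    -- the deficiency indices are unequal
    (hdef : Module.rank ℂ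
        ((LinearMap.range (T.toFun - Complex.I • T.domain.subtype))ᗮ) ≠
      Module.rank ℂ
        ((LinearMap.range (T.toFun + Complex.I • T.domain.subtype))ᗮ)) :
    ∃ (H' : Type u) (_ : NormedAddCommGroup H') (_ : InnerProductSpace ℂ H')
      (_ : CompleteSpace H') (ι : H →ₗᵢ[ℂ] H') (K : H' →ₗ.[ℂ] H'),
      IsSelfAdjoint K ∧
      (∀ u : T.domain, ι (u : H) ∈ K.domain) ∧
      (∀ (u : T.domain) (hu : ι (u : H) ∈ K.domain), K ⟨ι (u : H), hu⟩ = ι (T u)) :=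
  naimark_selfadjoint_extension_general T hdense hsymm
end
end

section
/- Let δ be a symmetric derivation on a *-subalgebra D of B(H) for a complex Hilbert space H. Let E ∈ D be a rank-one orthogonal projection and let Ω be a unit vector with EΩ = Ω; set ω(x) = ⟨Ω, xΩ⟩. Then for every A ∈ D one has |ω(δ(A))| ≤ 3·‖δ(E)‖·(ω(A*A) + ω(AA*))^{1/2}. -/
/-!
Self-adjointness and rank one force `E = |Ω⟩⟨Ω|`, so `E X E = ω(X) E` for every operator `X`.
Applying the Leibniz rule to `E A E = ω(A) E` and evaluating in `ω` gives
`ω(δ(E) A) + ω(δ(A)) + ω(A δ(E)) = ω(A) ω(δ(E))`. For `A = E` this reads `3 ω(δ(E)) = ω(δ(E))`,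
so `ω(δ(E)) = 0`, and then `ω(δ(A)) = -⟨Ω, δ(E) A Ω⟩ - ⟨A* Ω, δ(E) Ω⟩`, which Cauchy–Schwarz
bounds by `‖δ(E)‖ (‖A Ω‖ + ‖A* Ω‖)`, with `‖A Ω‖² = ω(A* A)` and `‖A* Ω‖² = ω(A A*)`.
-/

open InnerProductSpace ContinuousLinearMap
open scoped InnerProductSpace

section RankOne

variable {𝕜 E : Type*} [RCLike 𝕜] [NormedAddCommGroup E] [InnerProductSpace 𝕜 E]

theorem rankOne_mul_mul_rankOne (x y z w : E) (T : E →L[𝕜] E) :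
    rankOne 𝕜 x y * T * rankOne 𝕜 z w = ⟪y, T z⟫_𝕜 • rankOne 𝕜 x w := by
  ext ξ
  simp [smul_smul, mul_comm]

theorem eq_rankOne_of_isSelfAdjoint_of_finrank_range_eq_one [CompleteSpace E] {e : E →L[𝕜] E}
    (he : IsSelfAdjoint e) (hrank : Module.finrank 𝕜 (LinearMap.range (e : E →ₗ[𝕜] E)) = 1)
    {Ω : E} (hΩ : ‖Ω‖ = 1) (heΩ : e Ω = Ω) : e = rankOne 𝕜 Ω Ω := by
  have hΩ₀ : Ω ≠ 0 := norm_ne_zero_iff.mp (by simp [hΩ])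
  have : FiniteDimensional 𝕜 (LinearMap.range (e : E →ₗ[𝕜] E)) :=
    Module.finite_of_finrank_eq_succ hrank
  have hrange : (𝕜 ∙ Ω) = LinearMap.range (e : E →ₗ[𝕜] E) :=
    Submodule.eq_of_le_of_finrank_le ((Submodule.span_singleton_le_iff_mem _ _).2 ⟨Ω, heΩ⟩)
      (by rw [hrank, finrank_span_singleton hΩ₀])
  ext ξ
  obtain ⟨c, hc⟩ : ∃ c : 𝕜, c • Ω = e ξ :=
    Submodule.mem_span_singleton.1 (hrange ▸ LinearMap.mem_range_self _ ξ)
  have hcoeff : c = ⟪Ω, ξ⟫_𝕜 := calc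
    c = ⟪Ω, c • Ω⟫_𝕜 := by simp [inner_smul_right, inner_self_eq_norm_sq_to_K, hΩ]
    _ = ⟪e Ω, ξ⟫_𝕜 := by rw [hc]; exact (he.isSymmetric Ω ξ).symm
    _ = ⟪Ω, ξ⟫_𝕜 := by rw [heΩ]
  rw [rankOne_apply, ← hc, hcoeff]

end RankOne

section Derivation

variable {H : Type*} [NormedAddCommGroup H] [InnerProductSpace ℂ H] [CompleteSpace H]
  {D : NonUnitalStarSubalgebra ℂ (H →L[ℂ] H)} {δ : D →ₗ[ℂ] (H →L[ℂ] H)} {E : D} {Ω : H}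

theorem inner_derivation_rankOne_sandwich
    (hLeib : ∀ A B : D, δ (A * B) = δ A * (B : H →L[ℂ] H) + (A : H →L[ℂ] H) * δ B)
    (hΩ : ‖Ω‖ = 1) (hE : (E : H →L[ℂ] H) = rankOne ℂ Ω Ω) (A : D) :
    ⟪Ω, δ E ((A : H →L[ℂ] H) Ω)⟫_ℂ + ⟪Ω, δ A Ω⟫_ℂ + ⟪Ω, (A : H →L[ℂ] H) (δ E Ω)⟫_ℂ =
      ⟪Ω, (A : H →L[ℂ] H) Ω⟫_ℂ * ⟪Ω, δ E Ω⟫_ℂ := by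
  have hEAE : E * A * E = ⟪Ω, (A : H →L[ℂ] H) Ω⟫_ℂ • E := Subtype.ext <| by
    simp only [NonUnitalStarSubalgebra.coe_mul, NonUnitalStarSubalgebra.coe_smul, hE,
      rankOne_mul_mul_rankOne]
  have hδ := congrArg (fun T : H →L[ℂ] H ↦ ⟪Ω, T Ω⟫_ℂ) (congrArg δ hEAE)
  simpa [hLeib, hE, inner_add_right, inner_smul_right, inner_self_eq_norm_sq_to_K, hΩ] using hδ

theorem inner_derivation_rankOne_self_eq_zero
    (hLeib : ∀ A B : D, δ (A * B) = δ A * (B : H →L[ℂ] H) + (A : H →L[ℂ] H) * δ B)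
    (hΩ : ‖Ω‖ = 1) (hE : (E : H →L[ℂ] H) = rankOne ℂ Ω Ω) : ⟪Ω, δ E Ω⟫_ℂ = 0 := by
  have h : ⟪Ω, δ E Ω⟫_ℂ + ⟪Ω, δ E Ω⟫_ℂ + ⟪Ω, δ E Ω⟫_ℂ = 1 * ⟪Ω, δ E Ω⟫_ℂ := by
    simpa only [hE, rankOne_apply, map_smul, inner_smul_right, inner_self_eq_norm_sq_to_K, hΩ,
      Complex.ofReal_one, RCLike.ofReal_one, one_pow, one_smul, one_mul, mul_one] using
      inner_derivation_rankOne_sandwich hLeib hΩ hE E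
  linear_combination h / 2

theorem norm_inner_derivation_le
    (hLeib : ∀ A B : D, δ (A * B) = δ A * (B : H →L[ℂ] H) + (A : H →L[ℂ] H) * δ B)
    (hΩ : ‖Ω‖ = 1) (hE : (E : H →L[ℂ] H) = rankOne ℂ Ω Ω) (A : D) :
    ‖⟪Ω, δ A Ω⟫_ℂ‖ ≤ ‖δ E‖ * (‖(A : H →L[ℂ] H) Ω‖ + ‖adjoint (A : H →L[ℂ] H) Ω‖) := by
  set a : H →L[ℂ] H := (A : H →L[ℂ] H)
  have hω : ⟪Ω, δ A Ω⟫_ℂ = -⟪Ω, δ E (a Ω)⟫_ℂ - ⟪adjoint a Ω, δ E Ω⟫_ℂ := by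
    rw [adjoint_inner_left]
    linear_combination inner_derivation_rankOne_sandwich hLeib hΩ hE A +
      ⟪Ω, a Ω⟫_ℂ * inner_derivation_rankOne_self_eq_zero hLeib hΩ hE
  have h₁ : ‖⟪Ω, δ E (a Ω)⟫_ℂ‖ ≤ ‖δ E‖ * ‖a Ω‖ := calc
    _ ≤ ‖Ω‖ * ‖δ E (a Ω)‖ := norm_inner_le_norm _ _
    _ ≤ ‖δ E‖ * ‖a Ω‖ := by rw [hΩ, one_mul]; exact (δ E).le_opNorm _
  have h₂ : ‖⟪adjoint a Ω, δ E Ω⟫_ℂ‖ ≤ ‖δ E‖ * ‖adjoint a Ω‖ := calc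
    _ ≤ ‖adjoint a Ω‖ * ‖δ E Ω‖ := norm_inner_le_norm _ _
    _ ≤ ‖adjoint a Ω‖ * ‖δ E‖ := by
      gcongr; simpa [hΩ] using (δ E).le_opNorm Ω
    _ = ‖δ E‖ * ‖adjoint a Ω‖ := mul_comm _ _
  rw [hω, mul_add]
  exact (norm_sub_le _ _).trans (add_le_add (by rwa [norm_neg]) h₂)

end Derivation

theorem add_le_two_mul_sqrt_sq_add_sq (u v : ℝ) : u + v ≤ 2 * √(u ^ 2 + v ^ 2) := by
  have hu : u ≤ √(u ^ 2 + v ^ 2) := Real.le_sqrt_of_sq_le (by nlinarith)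
  have hv : v ≤ √(u ^ 2 + v ^ 2) := Real.le_sqrt_of_sq_le (by nlinarith)
  linarith

theorem state_bound_of_rank_one_projection_general
    {H : Type*} [NormedAddCommGroup H] [InnerProductSpace ℂ H] [CompleteSpace H]
    (D : NonUnitalStarSubalgebra ℂ (H →L[ℂ] H)) (δ : D →ₗ[ℂ] (H →L[ℂ] H))
    (hLeib : ∀ A B : D, δ (A * B) = δ A * (B : H →L[ℂ] H) + (A : H →L[ℂ] H) * δ B)
    (E : D)
    (hSA : IsSelfAdjoint (E : H →L[ℂ] H))
    (hrank : Module.finrank ℂ (LinearMap.range ((E : H →L[ℂ] H) : H →ₗ[ℂ] H)) = 1)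
    (Ω : H) (hΩ : ‖Ω‖ = 1) (hEΩ : (E : H →L[ℂ] H) Ω = Ω) :
    ∀ A : D, ‖(inner ℂ Ω (δ A Ω) : ℂ)‖ ≤
      3 * ‖δ E‖ * Real.sqrt ((inner ℂ Ω (((star A * A : D) : H →L[ℂ] H) Ω) : ℂ).re +
        (inner ℂ Ω (((A * star A : D) : H →L[ℂ] H) Ω) : ℂ).re) := by
  intro A
  set a : H →L[ℂ] H := (A : H →L[ℂ] H)
  have hE := eq_rankOne_of_isSelfAdjoint_of_finrank_range_eq_one hSA hrank hΩ hEΩ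
  have hA : (⟪Ω, ((star A * A : D) : H →L[ℂ] H) Ω⟫_ℂ).re = ‖a Ω‖ ^ 2 := by
    rw [apply_norm_sq_eq_inner_adjoint_right]; rfl
  have hA' : (⟪Ω, ((A * star A : D) : H →L[ℂ] H) Ω⟫_ℂ).re = ‖adjoint a Ω‖ ^ 2 := by
    rw [apply_norm_sq_eq_inner_adjoint_right, adjoint_adjoint]; rfl
  rw [hA, hA']
  calc ‖⟪Ω, δ A Ω⟫_ℂ‖ ≤ ‖δ E‖ * (‖a Ω‖ + ‖adjoint a Ω‖) :=
        norm_inner_derivation_le hLeib hΩ hE A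
    _ ≤ ‖δ E‖ * (2 * √(‖a Ω‖ ^ 2 + ‖adjoint a Ω‖ ^ 2)) := by
      gcongr; exact add_le_two_mul_sqrt_sq_add_sq _ _
    _ ≤ 3 * ‖δ E‖ * √(‖a Ω‖ ^ 2 + ‖adjoint a Ω‖ ^ 2) := by
      nlinarith [norm_nonneg (δ E), Real.sqrt_nonneg (‖a Ω‖ ^ 2 + ‖adjoint a Ω‖ ^ 2)]

/-- The key estimate in the proof of Lemma 3.3: if `δ` is a symmetric derivation on a
`*`-subalgebra `D ⊆ B(H)`, `E ∈ D` is a rank-one orthogonal projection and `Ω` is a unit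
vector with `EΩ = Ω`, then for `ω(x) = ⟨Ω, xΩ⟩` one has
`|ω(δ(A))| ≤ 3 ‖δ(E)‖ (ω(A*A) + ω(AA*))^{1/2}` for every `A ∈ D`. -/
theorem state_bound_of_rank_one_projection
    {H : Type*} [NormedAddCommGroup H] [InnerProductSpace ℂ H] [CompleteSpace H]
    (D : NonUnitalStarSubalgebra ℂ (H →L[ℂ] H)) (δ : D →ₗ[ℂ] (H →L[ℂ] H))
    (hLeib : ∀ A B : D, δ (A * B) = δ A * (B : H →L[ℂ] H) + (A : H →L[ℂ] H) * δ B)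
    (hSym : ∀ A : D, δ (star A) = star (δ A))
    (E : D) (hIdem : IsIdempotentElem (E : H →L[ℂ] H))
    (hSA : IsSelfAdjoint (E : H →L[ℂ] H))
    (hrank : Module.finrank ℂ (LinearMap.range ((E : H →L[ℂ] H) : H →ₗ[ℂ] H)) = 1)
    (Ω : H) (hΩ : ‖Ω‖ = 1) (hEΩ : (E : H →L[ℂ] H) Ω = Ω) :
    ∀ A : D, ‖(inner ℂ Ω (δ A Ω) : ℂ)‖ ≤
      3 * ‖δ E‖ * Real.sqrt ((inner ℂ Ω (((star A * A : D) : H →L[ℂ] H) Ω) : ℂ).re +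
        (inner ℂ Ω (((A * star A : D) : H →L[ℂ] H) Ω) : ℂ).re) :=
  state_bound_of_rank_one_projection_general D δ hLeib E hSA hrank Ω hΩ hEΩ
end

section
/- Let K and K' be complex Hilbert spaces, let L be a bounded self-adjoint operator on K with ⟨x, Lx⟩ ≤ 0 for all x ∈ K, and let R : K → K' be a bounded operator with R*R = −2L. Then for every integer n ≥ 1 and every ω ∈ K one has ‖R (I − L/n)^{-1} ω‖ ≤ ‖(−2L)^{1/2} ω‖, where (−2L)^{1/2} is the positive square root of the positive operator −2L. -/
/-!
Since `R†R = -2L`, the operator `B := R†R` is positive and `1 - L/n = 1 + r B` with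
`r = 1/(2n) ≥ 0`, which is invertible. If `y + r B y = ω`, then `‖R y‖² = re ⟪B y, y⟫` and
`‖S ω‖² = re ⟪B ω, ω⟫`; expanding the latter gives
`re ⟪B y, y⟫ + 2r ‖B y‖² + r² re ⟪B (B y), B y⟫ ≥ re ⟪B y, y⟫`.
-/

open scoped ComplexOrder

open ContinuousLinearMap RCLike in
theorem ContinuousLinearMap.IsPositive.re_inner_le_re_inner_add_smul
    {𝕜 E : Type*} [RCLike 𝕜] [NormedAddCommGroup E] [InnerProductSpace 𝕜 E]
    {B : E →L[𝕜] E} (hB : B.IsPositive) {r : ℝ} (hr : 0 ≤ r) (y : E) :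
    re (inner 𝕜 (B y) y) ≤ re (inner 𝕜 (B (y + (r : 𝕜) • B y)) (y + (r : 𝕜) • B y)) := by
  have hsymm : inner 𝕜 (B (B y)) y = inner 𝕜 (B y) (B y) := hB.isSymmetric (B y) y
  have hexpand : re (inner 𝕜 (B (y + (r : 𝕜) • B y)) (y + (r : 𝕜) • B y)) =
      re (inner 𝕜 (B y) y) + 2 * r * ‖B y‖ ^ 2 + r ^ 2 * re (inner 𝕜 (B (B y)) (B y)) := by
    simp only [map_add, map_smul, inner_add_left, inner_add_right, inner_smul_left,
      inner_smul_right, hsymm, conj_ofReal, re_ofReal_mul, inner_self_eq_norm_sq]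
    ring
  have hBBy : 0 ≤ r ^ 2 * re (inner 𝕜 (B (B y)) (B y)) :=
    mul_nonneg (sq_nonneg r) (hB.re_inner_nonneg_left (B y))
  rw [hexpand]
  linarith [show 0 ≤ 2 * r * ‖B y‖ ^ 2 by positivity]

theorem norm_R_resolvent_le_general
    {K K' : Type*} [NormedAddCommGroup K] [InnerProductSpace ℂ K] [CompleteSpace K]
    [NormedAddCommGroup K'] [InnerProductSpace ℂ K'] [CompleteSpace K']
    (L : K →L[ℂ] K)
    (R : K →L[ℂ] K')
    (hR : (ContinuousLinearMap.adjoint R).comp R = (-2 : ℂ) • L)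
    (S : K →L[ℂ] K) (hS : IsSelfAdjoint S)
    (hSsq : S * S = (-2 : ℂ) • L) :
    ∀ n : ℕ, 1 ≤ n → ∀ ω : K,
      IsUnit ((1 : K →L[ℂ] K) - ((n : ℂ))⁻¹ • L) ∧
        ‖R (Ring.inverse ((1 : K →L[ℂ] K) - ((n : ℂ))⁻¹ • L) ω)‖ ≤ ‖S ω‖ := by
  intro n hn ω
  set B := ContinuousLinearMap.adjoint R ∘L R
  set r : ℝ := (2 * n : ℝ)⁻¹
  have hr : 0 ≤ r := by positivity
  have hB : B.IsPositive := R.isPositive_adjoint_comp_self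
  have hT : (1 : K →L[ℂ] K) - ((n : ℂ))⁻¹ • L = 1 + (r : ℂ) • B := by
    have hn0 : (n : ℂ) ≠ 0 := by exact_mod_cast (show n ≠ 0 by omega)
    rw [hR, smul_smul, sub_eq_add_neg, ← neg_smul]
    congr 2
    push_cast [r]
    field_simp
  have hrB : 0 ≤ (r : ℂ) • B :=
    (ContinuousLinearMap.nonneg_iff_isPositive _).mpr
      (hB.smul_of_nonneg (RCLike.ofReal_nonneg.mpr hr))
  have hunit : IsUnit (1 + (r : ℂ) • B) :=
    CStarAlgebra.isUnit_of_le 1 (le_add_of_nonneg_right hrB)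
  rw [hT]
  refine ⟨hunit, ?_⟩
  set y := Ring.inverse (1 + (r : ℂ) • B) ω
  have hy : y + (r : ℂ) • B y = ω := by
    simpa only [mul_apply_eq_comp, add_apply, smul_apply, one_apply_eq_self] using
      congr($(Ring.mul_inverse_cancel _ hunit) ω)
  have hSS : ContinuousLinearMap.adjoint S ∘L S = B := by
    rw [hS.adjoint_eq, ← ContinuousLinearMap.mul_def, hSsq, hR]
  rw [← sq_le_sq₀ (norm_nonneg _) (norm_nonneg _),
    R.apply_norm_sq_eq_inner_adjoint_left, S.apply_norm_sq_eq_inner_adjoint_left, hSS, ← hy]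
  exact hB.re_inner_le_re_inner_add_smul hr y

/-- Let `L` be a bounded self-adjoint operator on a complex Hilbert space `K` with
`⟨x, Lx⟩ ≤ 0`, and let `R : K → K'` be bounded with `R*R = -2L`.  Then for every `n ≥ 1`
and every `ω`, `‖R (I - L/n)⁻¹ ω‖ ≤ ‖(-2L)^{1/2} ω‖`, where the square root is the
(unique) positive square root `S` of the positive operator `-2L`.  (Moreover `I - L/n`
is invertible, so `Ring.inverse` is its genuine inverse.) -/
theorem norm_R_resolvent_le
    {K K' : Type*} [NormedAddCommGroup K] [InnerProductSpace ℂ K] [CompleteSpace K]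
    [NormedAddCommGroup K'] [InnerProductSpace ℂ K'] [CompleteSpace K']
    (L : K →L[ℂ] K) (hL : IsSelfAdjoint L)
    (hneg : ∀ x : K, (inner ℂ x (L x) : ℂ) ≤ 0)
    (R : K →L[ℂ] K')
    (hR : (ContinuousLinearMap.adjoint R).comp R = (-2 : ℂ) • L)
    (S : K →L[ℂ] K) (hS : IsSelfAdjoint S)
    (hSpos : ∀ x : K, 0 ≤ (inner ℂ x (S x) : ℂ))
    (hSsq : S * S = (-2 : ℂ) • L) :
    ∀ n : ℕ, 1 ≤ n → ∀ ω : K,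
      IsUnit ((1 : K →L[ℂ] K) - ((n : ℂ))⁻¹ • L) ∧
        ‖R (Ring.inverse ((1 : K →L[ℂ] K) - ((n : ℂ))⁻¹ • L) ω)‖ ≤ ‖S ω‖ :=
  norm_R_resolvent_le_general L R hR S hS hSsq
end
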